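/- Let y, z : [0,1] → ℝ^p be continuously differentiable and let h : [0,1] → [0,1] be continuously differentiable with h(0) = 0, h(1) = 1 and h'(t) > 0 for all t ∈ [0,1]. Define the square-root velocity transform SRV(y)(t) = y'(t)/√(‖y'(t)‖) if ‖y'(t)‖ ≠ 0 and SRV(y)(t) = 0 otherwise, where ‖·‖ is the Euclidean norm on ℝ^p. Then ∫₀¹ ‖SRV(y ∘ h)(t) − SRV(z ∘ h)(t)‖² dt = ∫₀¹ ‖SRV(y)(s) − SRV(z)(s)‖² ds. -/
import Mathlib

noncomputable def srv {p : ℕ} (v : EuclideanSpace ℝ (Fin p)) : EuclideanSpace ℝ (Fin p) :=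
  if ‖v‖ = 0 then 0 else (Real.sqrt ‖v‖)⁻¹ • v

lemma srv_smul {p : ℕ} {c : ℝ} (hc : 0 < c) (v : EuclideanSpace ℝ (Fin p)) :
    srv (c • v) = Real.sqrt c • srv v := by
  by_cases hv : ‖v‖ = 0
  · have : v = 0 := norm_eq_zero.mp hv
    simp [this, srv]
  · have hcv : ‖c • v‖ = c * ‖v‖ := by
      rw [norm_smul, Real.norm_eq_abs, abs_of_pos hc]
    have hne : ‖c • v‖ ≠ 0 := by
      rw [hcv]; positivity
    rw [srv, srv, if_neg hne, if_neg hv, hcv, Real.sqrt_mul hc.le, smul_smul, smul_smul,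
      mul_inv]
    congr 1
    have hv1 : (0:ℝ) < ‖v‖ := lt_of_le_of_ne (norm_nonneg v) (Ne.symm hv)
    have h1 : Real.sqrt c ≠ 0 := by positivity
    have h2 : Real.sqrt ‖v‖ ≠ 0 := by positivity
    field_simp
    nlinarith [Real.sq_sqrt hc.le, Real.sqrt_nonneg ‖v‖, Real.sq_sqrt (norm_nonneg v)]

lemma norm_srv {p : ℕ} (v : EuclideanSpace ℝ (Fin p)) : ‖srv v‖ = Real.sqrt ‖v‖ := by
  by_cases hv : ‖v‖ = 0
  · simp [srv, hv]
  · have h1 : (0:ℝ) < ‖v‖ := lt_of_le_of_ne (norm_nonneg v) (Ne.symm hv)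
    rw [srv, if_neg hv, norm_smul, Real.norm_eq_abs, abs_inv,
      abs_of_nonneg (Real.sqrt_nonneg _),
      inv_mul_eq_iff_eq_mul₀ (by positivity)]
    exact (Real.mul_self_sqrt (norm_nonneg v)).symm

lemma continuous_srv {p : ℕ} : Continuous (srv (p := p)) := by
  rw [continuous_iff_continuousAt]
  intro v
  by_cases hv : v = 0
  · subst hv
    have h0 : srv (0 : EuclideanSpace ℝ (Fin p)) = 0 := by simp [srv]
    rw [ContinuousAt, h0, tendsto_zero_iff_norm_tendsto_zero]
    have : (fun w : EuclideanSpace ℝ (Fin p) => ‖srv w‖)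
        = fun w => Real.sqrt ‖w‖ := funext norm_srv
    rw [this]
    have : Filter.Tendsto (fun w : EuclideanSpace ℝ (Fin p) => Real.sqrt ‖w‖)
        (nhds 0) (nhds (Real.sqrt ‖(0 : EuclideanSpace ℝ (Fin p))‖)) :=
      (Real.continuous_sqrt.comp continuous_norm).continuousAt
    simpa using this
  · have h1 : (0:ℝ) < ‖v‖ := norm_pos_iff.mpr hv
    have hvn : Real.sqrt ‖v‖ ≠ 0 := by positivity
    have hcont : ContinuousAt (fun w : EuclideanSpace ℝ (Fin p) =>
        (Real.sqrt ‖w‖)⁻¹ • w) v :=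
      (((Real.continuous_sqrt.comp continuous_norm).continuousAt).inv₀ hvn).smul
        continuousAt_id
    refine hcont.congr ?_
    filter_upwards [IsOpen.mem_nhds isOpen_compl_singleton hv] with w hw
    rw [srv, if_neg (by simpa using hw)]

/-- Simultaneous warping of two continuously differentiable curves by an
orientation-preserving diffeomorphism `h` of `[0,1]` preserves the `L²` distance
between their SRV representations. -/
theorem stmt_13 (p : ℕ) (y y' z z' : ℝ → EuclideanSpace ℝ (Fin p)) (h h' : ℝ → ℝ)
    (hy : ∀ t ∈ Set.Icc (0:ℝ) 1, HasDerivWithinAt y (y' t) (Set.Icc (0:ℝ) 1) t)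
    (hy'c : ContinuousOn y' (Set.Icc (0:ℝ) 1))
    (hz : ∀ t ∈ Set.Icc (0:ℝ) 1, HasDerivWithinAt z (z' t) (Set.Icc (0:ℝ) 1) t)
    (hz'c : ContinuousOn z' (Set.Icc (0:ℝ) 1))
    (hmaps : Set.MapsTo h (Set.Icc (0:ℝ) 1) (Set.Icc (0:ℝ) 1))
    (hh : ∀ t ∈ Set.Icc (0:ℝ) 1, HasDerivWithinAt h (h' t) (Set.Icc (0:ℝ) 1) t)
    (hh'c : ContinuousOn h' (Set.Icc (0:ℝ) 1))
    (h0 : h 0 = 0) (h1 : h 1 = 1) (hpos : ∀ t ∈ Set.Icc (0:ℝ) 1, 0 < h' t)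
    (gy' gz' : ℝ → EuclideanSpace ℝ (Fin p))
    (hgy : ∀ t ∈ Set.Icc (0:ℝ) 1, HasDerivWithinAt (y ∘ h) (gy' t) (Set.Icc (0:ℝ) 1) t)
    (hgz : ∀ t ∈ Set.Icc (0:ℝ) 1, HasDerivWithinAt (z ∘ h) (gz' t) (Set.Icc (0:ℝ) 1) t) :
    ∫ t in Set.Icc (0:ℝ) 1, ‖srv (gy' t) - srv (gz' t)‖ ^ 2 =
      ∫ s in Set.Icc (0:ℝ) 1, ‖srv (y' s) - srv (z' s)‖ ^ 2 := by
  have udiff : UniqueDiffOn ℝ (Set.Icc (0:ℝ) 1) := uniqueDiffOn_Icc one_pos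
  set g : ℝ → ℝ := fun s => ‖srv (y' s) - srv (z' s)‖ ^ 2 with hg_def
  have hIcc : Set.uIcc (0:ℝ) 1 = Set.Icc (0:ℝ) 1 := Set.uIcc_of_le zero_le_one
  -- identify the derivatives of the compositions
  have keyy : ∀ t ∈ Set.Icc (0:ℝ) 1, gy' t = h' t • y' (h t) := by
    intro t ht
    have hcy : HasDerivWithinAt (y ∘ h) (h' t • y' (h t)) (Set.Icc (0:ℝ) 1) t :=
      HasDerivWithinAt.scomp t (hy (h t) (hmaps ht)) (hh t ht) hmaps
    exact ((hgy t ht).derivWithin (udiff t ht)).symm.trans (hcy.derivWithin (udiff t ht))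
  have keyz : ∀ t ∈ Set.Icc (0:ℝ) 1, gz' t = h' t • z' (h t) := by
    intro t ht
    have hcz : HasDerivWithinAt (z ∘ h) (h' t • z' (h t)) (Set.Icc (0:ℝ) 1) t :=
      HasDerivWithinAt.scomp t (hz (h t) (hmaps ht)) (hh t ht) hmaps
    exact ((hgz t ht).derivWithin (udiff t ht)).symm.trans (hcz.derivWithin (udiff t ht))
  -- pointwise integrand identity
  have hpt : ∀ t ∈ Set.Icc (0:ℝ) 1,
      ‖srv (gy' t) - srv (gz' t)‖ ^ 2 = h' t • (g ∘ h) t := by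
    intro t ht
    have hp := hpos t ht
    rw [keyy t ht, keyz t ht, srv_smul hp, srv_smul hp, ← smul_sub, norm_smul,
      Real.norm_eq_abs, abs_of_nonneg (Real.sqrt_nonneg _), mul_pow,
      Real.sq_sqrt hp.le]
    simp [hg_def, Function.comp, smul_eq_mul]
  -- continuity of g on [0,1]
  have hgc : ContinuousOn g (Set.Icc (0:ℝ) 1) :=
    (((continuous_srv.comp_continuousOn hy'c).sub
      (continuous_srv.comp_continuousOn hz'c)).norm.pow 2)
  rw [MeasureTheory.integral_Icc_eq_integral_Ioc,
    MeasureTheory.integral_Icc_eq_integral_Ioc,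
    ← intervalIntegral.integral_of_le zero_le_one,
    ← intervalIntegral.integral_of_le zero_le_one]
  calc (∫ t in (0:ℝ)..1, ‖srv (gy' t) - srv (gz' t)‖ ^ 2)
      = ∫ t in (0:ℝ)..1, h' t • (g ∘ h) t := by
        refine intervalIntegral.integral_congr ?_
        rw [hIcc]; exact hpt
    _ = ∫ u in (h 0)..(h 1), g u := by
        refine intervalIntegral.integral_comp_smul_deriv'' ?_ ?_ ?_ ?_
        · rw [hIcc]; exact fun t ht => (hh t ht).continuousWithinAt
        · intro x hx
          rw [min_eq_left zero_le_one, max_eq_right zero_le_one] at hx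
          have hx' : x ∈ Set.Icc (0:ℝ) 1 := Set.Ioo_subset_Icc_self hx
          exact ((hh x hx').hasDerivAt
            (Icc_mem_nhds hx.1 hx.2)).hasDerivWithinAt
        · rw [hIcc]; exact hh'c
        · refine hgc.mono ?_
          rw [hIcc]; exact hmaps.image_subset
    _ = ∫ s in (0:ℝ)..1, g s := by rw [h0, h1]
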